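/- arXiv:gr-qc/9707020 — 5 statements merged into one kernel-verified Lean document; each statement's English description precedes it below -/
import Mathlib

section
/- Fix j ∈ ℝ⁴ and let g be a symmetric invertible 4×4 real matrix with det g < 0 and jᵀ g j < 0. Define n(g) = √(− Σ_{μν} g_{μν} j^μ j^ν)/√(−det g) and u^μ = j^μ/(√(−det g) · n(g)). Then for every symmetric 4×4 matrix H, the directional derivative of n at g in direction H is (d/dt)|_{t=0} n(g + tH) = −(1/2) n(g) Σ_{μν} ((g⁻¹)^{μν} + u^μ u^ν) H_{μν}. -/
/-!
Since `n² = (−jᵀgj)/(−det g)`, logarithmic differentiation gives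
`n'/n = ½ ((jᵀHj)/(jᵀgj) − (det g)'/det g)`. The quadratic form is linear in `g`, and by Jacobi's
formula `(det g)'/det g = tr(g⁻¹H)`, which equals `Σ (g⁻¹)^{μν} H_{μν}` because `H` is symmetric;
finally `u^μ u^ν = j^μ j^ν/(−jᵀgj)`.
-/

open scoped BigOperators

/-- The rest mole density `n(g) = √(−Σ g_{μν} j^μ j^ν)/√(−det g)`. -/
noncomputable def nOf (j : Fin 4 → ℝ) (g : Matrix (Fin 4) (Fin 4) ℝ) : ℝ :=
  Real.sqrt (-(∑ μ, ∑ ν, g μ ν * j μ * j ν)) / Real.sqrt (-g.det)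

/-- The four-velocity `u^μ = j^μ/(√(−det g) n(g))`. -/
noncomputable def uOf (j : Fin 4 → ℝ) (g : Matrix (Fin 4) (Fin 4) ℝ) (μ : Fin 4) : ℝ :=
  j μ / (Real.sqrt (-g.det) * nOf j g)

namespace Matrix

variable {n 𝕜 : Type*} [Fintype n] [NontriviallyNormedField 𝕜]

open Polynomial in
theorem hasDerivAt_det_one_add_smul [DecidableEq n] (M : Matrix n n 𝕜) :
    HasDerivAt (fun t : 𝕜 => (1 + t • M).det) M.trace 0 := by
  have hpoly : (fun t : 𝕜 => (1 + t • M).det)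
      = fun t => (1 + (X : 𝕜[X]) • M.map C).det.eval t := by
    ext t
    simp [eval_det, ← smul_eq_mul_diagonal]
  rw [hpoly, ← derivative_det_one_add_X_smul]
  exact Polynomial.hasDerivAt _ 0

/-- Jacobi's formula. -/
theorem hasDerivAt_det_add_smul [DecidableEq n] {g : Matrix n n 𝕜} (hg : IsUnit g.det)
    (H : Matrix n n 𝕜) :
    HasDerivAt (fun t : 𝕜 => (g + t • H).det) (g.det * (g⁻¹ * H).trace) 0 := by
  have hfactor (t : 𝕜) : g + t • H = g * (1 + t • (g⁻¹ * H)) := by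
    rw [Matrix.mul_add, Matrix.mul_one, Matrix.mul_smul, ← Matrix.mul_assoc,
      mul_nonsing_inv g hg, Matrix.one_mul]
  simp_rw [hfactor, det_mul]
  exact (hasDerivAt_det_one_add_smul _).const_mul _

theorem hasDerivAt_sum_sum_add_smul_mul_mul (g H : Matrix n n 𝕜) (j : n → 𝕜) :
    HasDerivAt (fun t : 𝕜 => ∑ μ, ∑ ν, (g + t • H) μ ν * j μ * j ν)
      (∑ μ, ∑ ν, H μ ν * j μ * j ν) 0 := by
  have hlinear (t : 𝕜) : ∑ μ, ∑ ν, (g + t • H) μ ν * j μ * j ν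
      = ∑ μ, ∑ ν, g μ ν * j μ * j ν + t * ∑ μ, ∑ ν, H μ ν * j μ * j ν := by
    simp only [add_apply, smul_apply, smul_eq_mul, Finset.mul_sum, ← Finset.sum_add_distrib]
    exact Finset.sum_congr rfl fun μ _ => Finset.sum_congr rfl fun ν _ => by ring
  simp_rw [hlinear]
  exact (hasDerivAt_mul_const _).const_add _

end Matrix

theorem HasDerivAt.sqrt_neg_div_sqrt_neg {f g : ℝ → ℝ} {f' g' x : ℝ} (hf : HasDerivAt f f' x)
    (hg : HasDerivAt g g' x) (hfx : f x < 0) (hgx : g x < 0) :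
    HasDerivAt (fun t => √(-f t) / √(-g t))
      (-(1 / 2) * (√(-f x) / √(-g x)) * (g' / g x - f' / f x)) x := by
  have hsqrt_f := hf.fun_neg.sqrt (by linarith)
  have hsqrt_g := hg.fun_neg.sqrt (by linarith)
  have hsqrt_gx : √(-g x) ≠ 0 := (Real.sqrt_pos.2 (by linarith)).ne'
  refine (hsqrt_f.fun_div hsqrt_g hsqrt_gx).congr_deriv ?_
  have hsq_fx : √(-f x) ^ 2 = -f x := Real.sq_sqrt (by linarith)
  have hsq_gx : √(-g x) ^ 2 = -g x := Real.sq_sqrt (by linarith)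
  have hsqrt_fx : √(-f x) ≠ 0 := (Real.sqrt_pos.2 (by linarith)).ne'
  generalize √(-f x) = a at *
  generalize √(-g x) = b at *
  rw [show f x = -a ^ 2 by linarith, show g x = -b ^ 2 by linarith]
  field_simp
  ring

theorem sqrt_neg_det_mul_nOf {j : Fin 4 → ℝ} {g : Matrix (Fin 4) (Fin 4) ℝ} (hdet : g.det < 0) :
    √(-g.det) * nOf j g = √(-∑ μ, ∑ ν, g μ ν * j μ * j ν) :=
  mul_div_cancel₀ _ (Real.sqrt_pos.2 (neg_pos.2 hdet)).ne'

theorem uOf_mul_uOf {j : Fin 4 → ℝ} {g : Matrix (Fin 4) (Fin 4) ℝ} (hdet : g.det < 0)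
    (htl : ∑ μ, ∑ ν, g μ ν * j μ * j ν < 0) (μ ν : Fin 4) :
    uOf j g μ * uOf j g ν = j μ * j ν / -∑ μ, ∑ ν, g μ ν * j μ * j ν := by
  rw [uOf, uOf, sqrt_neg_det_mul_nOf hdet, div_mul_div_comm,
    Real.mul_self_sqrt (neg_nonneg.2 htl.le)]

theorem variation_of_rest_density_general (j : Fin 4 → ℝ) (g : Matrix (Fin 4) (Fin 4) ℝ)
    (hdet : g.det < 0)
    (htl : ∑ μ, ∑ ν, g μ ν * j μ * j ν < 0)
    (H : Matrix (Fin 4) (Fin 4) ℝ) (hH : H.IsSymm) :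
    deriv (fun t : ℝ => nOf j (g + t • H)) 0
      = -(1 / 2) * nOf j g * ∑ μ, ∑ ν, (g⁻¹ μ ν + uOf j g μ * uOf j g ν) * H μ ν := by
  have hderiv := (g.hasDerivAt_sum_sum_add_smul_mul_mul H j).sqrt_neg_div_sqrt_neg
    (Matrix.hasDerivAt_det_add_smul (isUnit_iff_ne_zero.2 hdet.ne) H)
    (by simpa using htl) (by simpa using hdet)
  simp only [zero_smul, add_zero] at hderiv
  have htrace : ∑ μ, ∑ ν, g⁻¹ μ ν * H μ ν = (g⁻¹ * H).trace :=
    (Matrix.sum_hadamard_eq g⁻¹ H).trans (by rw [hH.eq])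
  have hsum : ∑ μ, ∑ ν, (g⁻¹ μ ν + uOf j g μ * uOf j g ν) * H μ ν
      = (g⁻¹ * H).trace + (∑ μ, ∑ ν, H μ ν * j μ * j ν) / -∑ μ, ∑ ν, g μ ν * j μ * j ν := by
    simp only [add_mul, Finset.sum_add_distrib, htrace, uOf_mul_uOf hdet htl, Finset.sum_div]
    congr 1
    exact Finset.sum_congr rfl fun μ _ => Finset.sum_congr rfl fun ν _ => by ring
  refine hderiv.deriv.trans ?_
  rw [hsum, mul_div_cancel_left₀ _ hdet.ne]
  unfold nOf
  ring

/-- Variation of the rest mole density with respect to the metric: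
for every symmetric direction `H`,
`(d/dt)|₀ n(g + tH) = −(1/2) n(g) Σ_{μν} ((g⁻¹)^{μν} + u^μ u^ν) H_{μν}`. -/
theorem variation_of_rest_density (j : Fin 4 → ℝ) (g : Matrix (Fin 4) (Fin 4) ℝ)
    (hsymm : g.IsSymm) (hinv : IsUnit g.det) (hdet : g.det < 0)
    (htl : ∑ μ, ∑ ν, g μ ν * j μ * j ν < 0)
    (H : Matrix (Fin 4) (Fin 4) ℝ) (hH : H.IsSymm) :
    deriv (fun t : ℝ => nOf j (g + t • H)) 0
      = -(1 / 2) * nOf j g * ∑ μ, ∑ ν, (g⁻¹ μ ν + uOf j g μ * uOf j g ν) * H μ ν :=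
  variation_of_rest_density_general j g hdet htl H hH
end

section
/- Adopt the one-sided jump setup: g symmetric invertible 4×4 with det g < 0 and g³³ := (g⁻¹)³³ > 0; D⁺_ρ, D⁻_ρ symmetric 4×4 matrices for ρ ∈ {0,1,2,3} with D⁺_ρ = D⁻_ρ for ρ ≠ 3; one-sided Christoffel symbols Γ^{±λ}_{μν} = (1/2) Σ_ρ g^{λρ}(D^±_μ(ρ,ν) + D^±_ν(ρ,μ) − D^±_ρ(μ,ν)); A^{±3}_{μν} = Γ^{±3}_{μν} − (1/2)(δ³_μ Σ_κ Γ^{±κ}_{νκ} + δ³_ν Σ_κ Γ^{±κ}_{μκ}); L^±_{αβ} = −Γ^{±3}_{αβ}/√(g³³) for α,β ∈ {0,1,2}; [f] = f⁺ − f⁻. Let γ be the 3×3 block of g with indices in {0,1,2} (so det γ = det g · g³³ < 0) and γ^{αβ} the entries of γ⁻¹. Then the delta-function coefficient of the gravitational Lagrangian satisfies √(−det g) Σ_{μν} g^{μν} [A³_{μν}] = −2 √(−det γ) Σ_{αβ} γ^{αβ} [L_{αβ}]. (This is the algebraic core of Lemma 3: the singular part of √|g| R at a thin shell equals −2√|γ|[L]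 δ(x³ − x³₀).) -/
open scoped BigOperators

/-- One-sided Christoffel symbols
`Γ^λ_{μν} = (1/2) Σ_ρ g^{λρ}(D_μ(ρ,ν) + D_ν(ρ,μ) − D_ρ(μ,ν))` built from a metric `g`
and one-sided limits `D_ρ` of the metric derivatives `∂_ρ g`. -/
noncomputable def ChristJ (g : Matrix (Fin 4) (Fin 4) ℝ)
    (D : Fin 4 → Matrix (Fin 4) (Fin 4) ℝ) (lam μ ν : Fin 4) : ℝ :=
  (1 / 2) * ∑ ρ, g⁻¹ lam ρ * (D μ ρ ν + D ν ρ μ - D ρ μ ν)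

/-- The symbol `A³_{μν} = Γ³_{μν} − δ³_{(μ} Γ^κ_{ν)κ}`
(with symmetrization `δ³_{(μ}Γ^κ_{ν)κ} = (1/2)(δ³_μ Σ_κ Γ^κ_{νκ} + δ³_ν Σ_κ Γ^κ_{μκ})`). -/
noncomputable def Asym (g : Matrix (Fin 4) (Fin 4) ℝ)
    (D : Fin 4 → Matrix (Fin 4) (Fin 4) ℝ) (μ ν : Fin 4) : ℝ :=
  ChristJ g D 3 μ ν -
    (1 / 2) * ((if μ = 3 then (1 : ℝ) else 0) * ∑ κ, ChristJ g D κ ν κ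
      + (if ν = 3 then (1 : ℝ) else 0) * ∑ κ, ChristJ g D κ μ κ)

/-- The one-sided second fundamental form `L_{αβ} = −Γ³_{αβ}/√(g³³)` of the surface
`x³ = const` (tangential indices `α, β ∈ {0,1,2}` realized via `Fin.castSucc`). -/
noncomputable def Lsff (g : Matrix (Fin 4) (Fin 4) ℝ)
    (D : Fin 4 → Matrix (Fin 4) (Fin 4) ℝ) (α β : Fin 3) : ℝ :=
  -ChristJ g D 3 α.castSucc β.castSucc / Real.sqrt (g⁻¹ 3 3)

/-- Determinant of the induced 3-metric: `det γ = det g · g³³`. -/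
lemma det_gamma (g : Matrix (Fin 4) (Fin 4) ℝ) (hdet : g.det ≠ 0) :
    (g.submatrix (Fin.castSucc : Fin 3 → Fin 4) Fin.castSucc).det = g.det * g⁻¹ 3 3 := by
  have h1 : g⁻¹ 3 3 = (g.det)⁻¹ * g.adjugate 3 3 := by
    rw [Matrix.inv_def]
    simp [Ring.inverse_eq_inv']
  have h2 : g.adjugate 3 3
      = (g.submatrix (Fin.castSucc : Fin 3 → Fin 4) Fin.castSucc).det := by
    rw [Matrix.adjugate_fin_succ_eq_det_submatrix]
    have h3 : ((3 : Fin 4).succAbove : Fin 3 → Fin 4) = Fin.castSucc := by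
      have : (3 : Fin 4) = Fin.last 3 := rfl
      rw [this, Fin.succAbove_last]
    rw [h3]
    norm_num
  rw [h1, ← h2]
  field_simp

/-- Entries of the inverse induced 3-metric: `γ^{αβ} = g^{αβ} − g^{α3} g^{3β} / g^{33}`. -/
lemma gamma_inv (g : Matrix (Fin 4) (Fin 4) ℝ) (hdet : g.det ≠ 0) (h33 : g⁻¹ 3 3 ≠ 0)
    (α β : Fin 3) :
    (g.submatrix (Fin.castSucc : Fin 3 → Fin 4) Fin.castSucc)⁻¹ α β
      = g⁻¹ α.castSucc β.castSucc - g⁻¹ α.castSucc 3 * g⁻¹ 3 β.castSucc / g⁻¹ 3 3 := by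
  have hinv : g * g⁻¹ = 1 := Matrix.mul_nonsing_inv g (Ne.isUnit hdet)
  have e1 : ∀ x y : Fin 4, (∑ k, g x k * g⁻¹ k y) = if x = y then (1:ℝ) else 0 := by
    intro x y
    rw [← Matrix.mul_apply, hinv, Matrix.one_apply]
  have hrec : ∀ (a : Fin 3) (y : Fin 4),
      ∑ δ : Fin 3, g a.castSucc δ.castSucc * g⁻¹ δ.castSucc y
        = (if a.castSucc = y then (1:ℝ) else 0) - g a.castSucc 3 * g⁻¹ 3 y := by
    intro a y
    have h := e1 a.castSucc y
    rw [Fin.sum_univ_castSucc] at h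
    have hl : (Fin.last 3 : Fin 4) = 3 := rfl
    rw [hl] at h
    linarith
  have key : g.submatrix (Fin.castSucc : Fin 3 → Fin 4) Fin.castSucc *
      (Matrix.of fun a b => g⁻¹ a.castSucc b.castSucc - g⁻¹ a.castSucc 3 * g⁻¹ 3 b.castSucc / g⁻¹ 3 3
        : Matrix (Fin 3) (Fin 3) ℝ) = 1 := by
    ext a b
    simp only [Matrix.mul_apply, Matrix.submatrix_apply, Matrix.of_apply]
    have expand : ∀ δ : Fin 3,
        g a.castSucc δ.castSucc *
          (g⁻¹ δ.castSucc b.castSucc - g⁻¹ δ.castSucc 3 * g⁻¹ 3 b.castSucc / g⁻¹ 3 3)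
        = g a.castSucc δ.castSucc * g⁻¹ δ.castSucc b.castSucc
          - (g a.castSucc δ.castSucc * g⁻¹ δ.castSucc 3) * (g⁻¹ 3 b.castSucc / g⁻¹ 3 3) := by
      intro δ; ring
    rw [Finset.sum_congr rfl (fun δ _ => expand δ), Finset.sum_sub_distrib,
      ← Finset.sum_mul, hrec a b.castSucc, hrec a 3]
    have hne : a.castSucc ≠ (3 : Fin 4) := by
      have := Fin.castSucc_lt_last a
      exact Fin.ne_of_lt this
    rw [if_neg hne, Matrix.one_apply]
    set x := g a.castSucc 3 with hx
    set u := g⁻¹ 3 b.castSucc with hu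
    set w := g⁻¹ 3 3 with hw
    by_cases hab : a = b
    · rw [if_pos (by simp [hab]), if_pos hab]
      field_simp
      ring
    · rw [if_neg (by simp [Fin.castSucc_inj, hab]), if_neg hab]
      field_simp
      ring
  rw [Matrix.inv_eq_right_inv key]
  rfl

/-- The jump of `√(−g) g^{μν} A³_{μν}` as an explicit quadratic in `g⁻¹` against the
normal derivative jump `[∂₃ g]`. -/
lemma core (g : Matrix (Fin 4) (Fin 4) ℝ)
    (Dp Dm : Fin 4 → Matrix (Fin 4) (Fin 4) ℝ)
    (hg : ∀ i j, g⁻¹ j i = g⁻¹ i j)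
    (hDp : ∀ ρ i j, Dp ρ j i = Dp ρ i j) (hDm : ∀ ρ i j, Dm ρ j i = Dm ρ i j)
    (htang : ∀ ρ, ρ ≠ 3 → Dp ρ = Dm ρ) :
    ∑ μ, ∑ ν, g⁻¹ μ ν * (Asym g Dp μ ν - Asym g Dm μ ν)
      = ∑ α : Fin 3, ∑ β : Fin 3,
          (g⁻¹ α.castSucc 3 * g⁻¹ 3 β.castSucc - g⁻¹ 3 3 * g⁻¹ α.castSucc β.castSucc) *
            (Dp 3 α.castSucc β.castSucc - Dm 3 α.castSucc β.castSucc) := by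
  have t0 : Dp 0 = Dm 0 := htang 0 (by decide)
  have t1 : Dp 1 = Dm 1 := htang 1 (by decide)
  have t2 : Dp 2 = Dm 2 := htang 2 (by decide)
  simp only [Asym, ChristJ, Fin.sum_univ_four, Fin.sum_univ_three, t0, t1, t2,
    Fin.isValue, show (Fin.castSucc (0:Fin 3)) = (0:Fin 4) from rfl,
    show (Fin.castSucc (1:Fin 3)) = (1:Fin 4) from rfl,
    show (Fin.castSucc (2:Fin 3)) = (2:Fin 4) from rfl,
    show ((0:Fin 4) = 3) = False from by decide,
    show ((1:Fin 4) = 3) = False from by decide,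
    show ((2:Fin 4) = 3) = False from by decide,
    show ((3:Fin 4) = 3) = True from by decide,
    if_true, if_false, ite_true, ite_false]
  simp only [hg 0 1, hg 0 2, hg 0 3, hg 1 2, hg 1 3, hg 2 3,
    hDp 3 0 1, hDp 3 0 2, hDp 3 0 3, hDp 3 1 2, hDp 3 1 3, hDp 3 2 3,
    hDm 3 0 1, hDm 3 0 2, hDm 3 0 3, hDm 3 1 2, hDm 3 1 3, hDm 3 2 3,
    hDm 0 0 1, hDm 0 0 2, hDm 0 0 3, hDm 0 1 2, hDm 0 1 3, hDm 0 2 3,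
    hDm 1 0 1, hDm 1 0 2, hDm 1 0 3, hDm 1 1 2, hDm 1 1 3, hDm 1 2 3,
    hDm 2 0 1, hDm 2 0 2, hDm 2 0 3, hDm 2 1 2, hDm 2 1 3, hDm 2 2 3]
  ring

/-- Scalar identity used in the final assembly. -/
lemma scal (A p q r w s e : ℝ) (hw : w ≠ 0) (hs : s * s = w) :
    A * ((p * q - w * r) * e) = -2 * (A * s) * ((r - p * q / w) * (s / 2 * e)) := by
  have h2 : -2 * (A * s) * ((r - p * q / w) * (s / 2 * e))
      = -(A * (s * s)) * ((r - p * q / w) * e) := by ring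
  rw [h2, hs]
  field_simp
  ring

/-- Algebraic core of Lemma 3: the delta-function coefficient of the gravitational
Lagrangian at a thin shell satisfies
`√(−det g) Σ_{μν} g^{μν} [A³_{μν}] = −2 √(−det γ) Σ_{αβ} γ^{αβ} [L_{αβ}]`,
where `γ` is the induced 3-metric (the 3×3 block of `g` with indices in `{0,1,2}`),
`[f] = f⁺ − f⁻`, and the tangential derivative jumps vanish (`D⁺_ρ = D⁻_ρ` for `ρ ≠ 3`). -/
theorem shell_lagrangian_delta_coefficient (g : Matrix (Fin 4) (Fin 4) ℝ)
    (hsymm : g.IsSymm) (hdet : g.det < 0) (h33 : 0 < g⁻¹ 3 3)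
    (Dp Dm : Fin 4 → Matrix (Fin 4) (Fin 4) ℝ)
    (hDp : ∀ ρ, (Dp ρ).IsSymm) (hDm : ∀ ρ, (Dm ρ).IsSymm)
    (htang : ∀ ρ, ρ ≠ 3 → Dp ρ = Dm ρ) :
    Real.sqrt (-g.det) * ∑ μ, ∑ ν, g⁻¹ μ ν * (Asym g Dp μ ν - Asym g Dm μ ν)
      = -2 * Real.sqrt (-(g.submatrix (Fin.castSucc : Fin 3 → Fin 4) Fin.castSucc).det) *
          ∑ α, ∑ β, (g.submatrix (Fin.castSucc : Fin 3 → Fin 4) Fin.castSucc)⁻¹ α β *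
            (Lsff g Dp α β - Lsff g Dm α β) := by
  have hdetne : g.det ≠ 0 := ne_of_lt hdet
  have h33ne : g⁻¹ 3 3 ≠ 0 := ne_of_gt h33
  have hs : Real.sqrt (g⁻¹ 3 3) ≠ 0 := ne_of_gt (Real.sqrt_pos.mpr h33)
  have hss : Real.sqrt (g⁻¹ 3 3) * Real.sqrt (g⁻¹ 3 3) = g⁻¹ 3 3 :=
    Real.mul_self_sqrt h33.le
  have hinvsymm : ∀ i j, g⁻¹ j i = g⁻¹ i j := by
    intro i j
    have hsi : (g⁻¹).IsSymm := by
      unfold Matrix.IsSymm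
      rw [Matrix.transpose_nonsing_inv, hsymm.eq]
    exact hsi.apply i j
  -- jump of the second fundamental form
  have Lj : ∀ α β : Fin 3, Lsff g Dp α β - Lsff g Dm α β
      = Real.sqrt (g⁻¹ 3 3) / 2 *
          (Dp 3 α.castSucc β.castSucc - Dm 3 α.castSucc β.castSucc) := by
    intro α β
    have ht : ∀ γ : Fin 3, Dp γ.castSucc = Dm γ.castSucc :=
      fun γ => htang _ (Fin.ne_of_lt (Fin.castSucc_lt_last γ))
    have hΓ : ChristJ g Dp 3 α.castSucc β.castSucc - ChristJ g Dm 3 α.castSucc β.castSucc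
        = -(1/2) * g⁻¹ 3 3 *
          (Dp 3 α.castSucc β.castSucc - Dm 3 α.castSucc β.castSucc) := by
      have e0 : Dp 0 = Dm 0 := htang 0 (by decide)
      have e1 : Dp 1 = Dm 1 := htang 1 (by decide)
      have e2 : Dp 2 = Dm 2 := htang 2 (by decide)
      simp only [ChristJ, Fin.sum_univ_four, ht α, ht β, e0, e1, e2]
      ring
    simp only [Lsff]
    rw [div_sub_div_same, show -ChristJ g Dp 3 α.castSucc β.castSucc -
        -ChristJ g Dm 3 α.castSucc β.castSucc
      = -(ChristJ g Dp 3 α.castSucc β.castSucc - ChristJ g Dm 3 α.castSucc β.castSucc) from by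
        ring, hΓ]
    rw [div_eq_iff hs]
    linear_combination -(Dp 3 α.castSucc β.castSucc - Dm 3 α.castSucc β.castSucc) / 2 * hss
  -- determinant of the induced metric
  have hγdet : -(g.submatrix (Fin.castSucc : Fin 3 → Fin 4) Fin.castSucc).det
      = (-g.det) * g⁻¹ 3 3 := by
    rw [det_gamma g hdetne]; ring
  have hDp' : ∀ ρ i j, Dp ρ j i = Dp ρ i j := fun ρ => (hDp ρ).apply
  have hDm' : ∀ ρ i j, Dm ρ j i = Dm ρ i j := fun ρ => (hDm ρ).apply
  rw [core g Dp Dm hinvsymm hDp' hDm' htang, hγdet,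
    Real.sqrt_mul (by linarith : (0:ℝ) ≤ -g.det)]
  have hsum : ∑ α : Fin 3, ∑ β : Fin 3,
      (g.submatrix (Fin.castSucc : Fin 3 → Fin 4) Fin.castSucc)⁻¹ α β *
        (Lsff g Dp α β - Lsff g Dm α β)
    = ∑ α : Fin 3, ∑ β : Fin 3,
        (g⁻¹ α.castSucc β.castSucc - g⁻¹ α.castSucc 3 * g⁻¹ 3 β.castSucc / g⁻¹ 3 3) *
          (Real.sqrt (g⁻¹ 3 3) / 2 *
            (Dp 3 α.castSucc β.castSucc - Dm 3 α.castSucc β.castSucc)) := by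
    refine Finset.sum_congr rfl fun α _ => Finset.sum_congr rfl fun β _ => ?_
    rw [gamma_inv g hdetne h33ne, Lj]
  rw [hsum, Finset.mul_sum, Finset.mul_sum]
  refine Finset.sum_congr rfl fun α _ => ?_
  rw [Finset.mul_sum, Finset.mul_sum]
  refine Finset.sum_congr rfl fun β _ => ?_
  exact scal (Real.sqrt (-g.det)) (g⁻¹ α.castSucc 3) (g⁻¹ 3 β.castSucc)
    (g⁻¹ α.castSucc β.castSucc) (g⁻¹ 3 3) (Real.sqrt (g⁻¹ 3 3))
    (Dp 3 α.castSucc β.castSucc - Dm 3 α.castSucc β.castSucc) h33ne hss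
end

section
/- Adopt the one-sided jump setup: g symmetric invertible 4×4 with det g < 0 and g³³ := (g⁻¹)³³ > 0; D⁺_ρ, D⁻_ρ symmetric 4×4 matrices for ρ ∈ {0,1,2,3} with D⁺_ρ = D⁻_ρ for ρ ≠ 3; one-sided Christoffel symbols Γ^{±λ}_{μν} = (1/2) Σ_ρ g^{λρ}(D^±_μ(ρ,ν) + D^±_ν(ρ,μ) − D^±_ρ(μ,ν)); A^{±3}_{μν} = Γ^{±3}_{μν} − (1/2)(δ³_μ Σ_κ Γ^{±κ}_{νκ} + δ³_ν Σ_κ Γ^{±κ}_{μκ}); L^±_{αβ} = −Γ^{±3}_{αβ}/√(g³³) for α,β ∈ {0,1,2}; [f] = f⁺ − f⁻. Then the jumps of the A-symbols are expressed through the jump of the second fundamental form as follows (tangential indices α, β ∈ {0,1,2}, summation over β): (i) [A³_{33}] = −(Σ_{αβ} g^{αβ} [L_{αβ}])/√(g³³); (ii) [A³_{α3}] = (Σ_β g^{3β} [L_{αβ}])/√(g³³); (iii) [A³_{αβ}] = −√(g³³) [L_{αβ}]. -/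
/-!
Across the surface only the normal derivative of the metric jumps, so `[D_ρ] = δ³_ρ K` with `K`
symmetric. Christoffel symbols are linear in `D`, hence
`[Γ^λ_{μν}] = ½ (δ³_μ (g⁻¹K)^λ_ν + δ³_ν (g⁻¹K)^λ_μ − g^{λ3} K_{μν})`. In particular
`[Γ³_{αβ}] = −½ g³³ K_{αβ}`, i.e. `[L_{αβ}] = ½ √g³³ K_{αβ}`, and the contraction is
`[Γ^κ_{νκ}] = ½ δ³_ν tr(g⁻¹K)`. Substituting into `A` gives the three formulas; in `[A³_{33}]` all
components of `K` with a normal index cancel against the trace, leaving only the tangential ones.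
-/

open scoped BigOperators

theorem Matrix.trace_mul_eq_sum_castSucc_add {R : Type*} [CommRing R] {n : ℕ}
    (M K : Matrix (Fin (n + 1)) (Fin (n + 1)) R) :
    (M * K).trace = ∑ α : Fin n, ∑ β : Fin n, M α.castSucc β.castSucc * K β.castSucc α.castSucc
      + (M * K) (Fin.last n) (Fin.last n) + (K * M) (Fin.last n) (Fin.last n)
      - M (Fin.last n) (Fin.last n) * K (Fin.last n) (Fin.last n) := by
  simp only [Matrix.trace, Matrix.diag, Matrix.mul_apply, Fin.sum_univ_castSucc,
    Finset.sum_add_distrib, mul_comm (K _ _)]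
  ring

theorem Pi.sub_eq_single_of_eq_of_ne {ι M : Type*} [DecidableEq ι] [AddGroup M] {f f' : ι → M}
    (i : ι) (h : ∀ j, j ≠ i → f j = f' j) : f - f' = Pi.single i (f i - f' i) := by
  funext j
  rcases eq_or_ne j i with rfl | hj
  · simp
  · simp [hj, h j hj]

theorem castSucc_ne_three (α : Fin 3) : α.castSucc ≠ 3 := Fin.castSucc_ne_last α

section

variable {g : Matrix (Fin 4) (Fin 4) ℝ}

theorem ChristJ_sub (D D' : Fin 4 → Matrix (Fin 4) (Fin 4) ℝ) (lam μ ν : Fin 4) :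
    ChristJ g (D - D') lam μ ν = ChristJ g D lam μ ν - ChristJ g D' lam μ ν := by
  simp only [ChristJ, Pi.sub_apply, Matrix.sub_apply, ← mul_sub, ← Finset.sum_sub_distrib]
  congr 1
  exact Finset.sum_congr rfl fun ρ _ => by ring

theorem Asym_sub (D D' : Fin 4 → Matrix (Fin 4) (Fin 4) ℝ) (μ ν : Fin 4) :
    Asym g (D - D') μ ν = Asym g D μ ν - Asym g D' μ ν := by
  simp only [Asym, ChristJ_sub, Finset.sum_sub_distrib]
  ring

theorem Lsff_sub (D D' : Fin 4 → Matrix (Fin 4) (Fin 4) ℝ) (α β : Fin 3) :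
    Lsff g (D - D') α β = Lsff g D α β - Lsff g D' α β := by
  simp only [Lsff, ChristJ_sub]
  ring

variable (K : Matrix (Fin 4) (Fin 4) ℝ)

theorem ChristJ_single_three (lam μ ν : Fin 4) :
    ChristJ g (Pi.single 3 K) lam μ ν =
      ((if μ = 3 then (g⁻¹ * K) lam ν else 0) + (if ν = 3 then (g⁻¹ * K) lam μ else 0)
        - g⁻¹ lam 3 * K μ ν) / 2 := by
  have hsingle : ∀ ρ i j,
      (Pi.single 3 K : Fin 4 → Matrix (Fin 4) (Fin 4) ℝ) ρ i j = if ρ = 3 then K i j else 0 := by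
    intro ρ i j
    rcases eq_or_ne ρ 3 with rfl | hρ <;> simp [*]
  simp only [ChristJ, hsingle, Matrix.mul_apply]
  split_ifs <;> simp [Finset.sum_sub_distrib, Finset.sum_add_distrib, mul_add, mul_sub] <;> ring

variable {K}

theorem sum_ChristJ_single_three (hg : g.IsSymm) (hK : K.IsSymm) (ν : Fin 4) :
    ∑ κ, ChristJ g (Pi.single 3 K) κ ν κ = if ν = 3 then (g⁻¹ * K).trace / 2 else 0 := by
  have hcancel : (g⁻¹ * K) 3 ν = ∑ κ, g⁻¹ κ 3 * K ν κ := by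
    simp only [Matrix.mul_apply, hg.inv.apply, hK.apply]
  simp only [ChristJ_single_three, ← Finset.sum_div, Finset.sum_sub_distrib,
    Finset.sum_add_distrib, Finset.sum_ite_eq', Finset.mem_univ, if_true, hcancel]
  split_ifs <;> simp [Matrix.trace]

theorem Asym_castSucc_castSucc_single_three (α β : Fin 3) :
    Asym g (Pi.single 3 K) α.castSucc β.castSucc = -(g⁻¹ 3 3 * K α.castSucc β.castSucc) / 2 := by
  simp [Asym, ChristJ_single_three, castSucc_ne_three]

theorem Asym_castSucc_three_single_three (hg : g.IsSymm) (hK : K.IsSymm) (α : Fin 3) :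
    Asym g (Pi.single 3 K) α.castSucc 3 =
      (∑ β : Fin 3, g⁻¹ 3 β.castSucc * K β.castSucc α.castSucc) / 2 := by
  simp only [Asym, sum_ChristJ_single_three hg hK, castSucc_ne_three, if_true, if_false]
  simp only [ChristJ_single_three, castSucc_ne_three, if_true, if_false]
  rw [Matrix.mul_apply, Fin.sum_univ_castSucc, show Fin.last 3 = 3 from rfl, hK.apply α.castSucc 3]
  ring

theorem Asym_three_three_single_three (hg : g.IsSymm) (hK : K.IsSymm) :
    Asym g (Pi.single 3 K) 3 3 =
      -(∑ α : Fin 3, ∑ β : Fin 3, g⁻¹ α.castSucc β.castSucc * K α.castSucc β.castSucc) / 2 := by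
  have hKg : (K * g⁻¹) 3 3 = (g⁻¹ * K) 3 3 := by
    rw [← Matrix.transpose_apply (g⁻¹ * K), Matrix.transpose_mul, hK.eq, hg.inv.eq]
  rw [Asym, sum_ChristJ_single_three hg hK, ChristJ_single_three,
    Matrix.trace_mul_eq_sum_castSucc_add, show Fin.last 3 = 3 from rfl]
  simp only [if_true, hKg, hK.apply]
  ring

theorem Lsff_single_three (h33 : 0 ≤ g⁻¹ 3 3) (α β : Fin 3) :
    Lsff g (Pi.single 3 K) α β = √(g⁻¹ 3 3) * K α.castSucc β.castSucc / 2 := by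
  have hChrist : ChristJ g (Pi.single 3 K) 3 α.castSucc β.castSucc =
      -(√(g⁻¹ 3 3) * √(g⁻¹ 3 3) * K α.castSucc β.castSucc) / 2 := by
    simp [ChristJ_single_three, castSucc_ne_three, Real.mul_self_sqrt h33]
  rw [Lsff, hChrist]
  generalize √(g⁻¹ 3 3) = s
  rcases eq_or_ne s 0 with rfl | hs
  · simp
  · field_simp

end

theorem jumps_of_A_symbols_general (g : Matrix (Fin 4) (Fin 4) ℝ)
    (hsymm : g.IsSymm) (h33 : 0 < g⁻¹ 3 3)
    (Dp Dm : Fin 4 → Matrix (Fin 4) (Fin 4) ℝ)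
    (hDp : ∀ ρ, (Dp ρ).IsSymm) (hDm : ∀ ρ, (Dm ρ).IsSymm)
    (htang : ∀ ρ, ρ ≠ 3 → Dp ρ = Dm ρ) :
    (Asym g Dp 3 3 - Asym g Dm 3 3
        = -(∑ α, ∑ β, g⁻¹ α.castSucc β.castSucc * (Lsff g Dp α β - Lsff g Dm α β)) /
            Real.sqrt (g⁻¹ 3 3)) ∧
    (∀ α : Fin 3, Asym g Dp α.castSucc 3 - Asym g Dm α.castSucc 3
        = (∑ β, g⁻¹ 3 β.castSucc * (Lsff g Dp α β - Lsff g Dm α β)) /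
            Real.sqrt (g⁻¹ 3 3)) ∧
    (∀ α β : Fin 3, Asym g Dp α.castSucc β.castSucc - Asym g Dm α.castSucc β.castSucc
        = -Real.sqrt (g⁻¹ 3 3) * (Lsff g Dp α β - Lsff g Dm α β)) := by
  set K := Dp 3 - Dm 3
  have hK : K.IsSymm := (hDp 3).sub (hDm 3)
  have hjump : Dp - Dm = Pi.single 3 K := Pi.sub_eq_single_of_eq_of_ne 3 htang
  have hs : √(g⁻¹ 3 3) ≠ 0 := (Real.sqrt_pos.2 h33).ne'
  have hss : √(g⁻¹ 3 3) * √(g⁻¹ 3 3) = g⁻¹ 3 3 := Real.mul_self_sqrt h33.le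
  simp only [← Asym_sub, ← Lsff_sub, hjump, Lsff_single_three h33.le]
  refine ⟨?_, fun α => ?_, fun α β => ?_⟩
  · have hterm : ∀ α β : Fin 3,
        g⁻¹ α.castSucc β.castSucc * (√(g⁻¹ 3 3) * K α.castSucc β.castSucc / 2)
          = √(g⁻¹ 3 3) / 2 * (g⁻¹ α.castSucc β.castSucc * K α.castSucc β.castSucc) :=
      fun _ _ => by ring
    rw [Asym_three_three_single_three hsymm hK]
    simp only [hterm, ← Finset.mul_sum]
    field_simp
  · have hterm : ∀ β : Fin 3, g⁻¹ 3 β.castSucc * (√(g⁻¹ 3 3) * K α.castSucc β.castSucc / 2)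
        = √(g⁻¹ 3 3) / 2 * (g⁻¹ 3 β.castSucc * K β.castSucc α.castSucc) :=
      fun β => by rw [hK.apply]; ring
    rw [Asym_castSucc_three_single_three hsymm hK]
    simp only [hterm, ← Finset.mul_sum]
    field_simp
  · rw [Asym_castSucc_castSucc_single_three]
    linear_combination (K α.castSucc β.castSucc / 2) * hss

/-- Equations (24.1)–(24.3): the jumps of the `A`-symbols across the shell are expressed
through the jump of the second fundamental form:
(i) `[A³_{33}] = −(Σ_{αβ} g^{αβ} [L_{αβ}])/√(g³³)`;
(ii) `[A³_{α3}] = (Σ_β g^{3β} [L_{αβ}])/√(g³³)`;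
(iii) `[A³_{αβ}] = −√(g³³) [L_{αβ}]`. -/
theorem jumps_of_A_symbols (g : Matrix (Fin 4) (Fin 4) ℝ)
    (hsymm : g.IsSymm) (hdet : g.det < 0) (h33 : 0 < g⁻¹ 3 3)
    (Dp Dm : Fin 4 → Matrix (Fin 4) (Fin 4) ℝ)
    (hDp : ∀ ρ, (Dp ρ).IsSymm) (hDm : ∀ ρ, (Dm ρ).IsSymm)
    (htang : ∀ ρ, ρ ≠ 3 → Dp ρ = Dm ρ) :
    (Asym g Dp 3 3 - Asym g Dm 3 3
        = -(∑ α, ∑ β, g⁻¹ α.castSucc β.castSucc * (Lsff g Dp α β - Lsff g Dm α β)) /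
            Real.sqrt (g⁻¹ 3 3)) ∧
    (∀ α : Fin 3, Asym g Dp α.castSucc 3 - Asym g Dm α.castSucc 3
        = (∑ β, g⁻¹ 3 β.castSucc * (Lsff g Dp α β - Lsff g Dm α β)) /
            Real.sqrt (g⁻¹ 3 3)) ∧
    (∀ α β : Fin 3, Asym g Dp α.castSucc β.castSucc - Asym g Dm α.castSucc β.castSucc
        = -Real.sqrt (g⁻¹ 3 3) * (Lsff g Dp α β - Lsff g Dm α β)) :=
  jumps_of_A_symbols_general g hsymm h33 Dp Dm hDp hDm htang
end

section
/- Adopt the one-sided jump setup: g symmetric invertible 4×4 with det g < 0 and g³³ := (g⁻¹)³³ > 0; D⁺_ρ, D⁻_ρ symmetric 4×4 matrices for ρ ∈ {0,1,2,3} with D⁺_ρ = D⁻_ρ for ρ ≠ 3; one-sided Christoffel symbols Γ^{±λ}_{μν} = (1/2) Σ_ρ g^{λρ}(D^±_μ(ρ,ν) + D^±_ν(ρ,μ) − D^±_ρ(μ,ν)); L^±_{αβ} = −Γ^{±3}_{αβ}/√(g³³) for α,β ∈ {0,1,2}; [f] = f⁺ − f⁻; γ the 3×3 block of g with indices in {0,1,2}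 and γ^{αβ} the entries of γ⁻¹. Then the delta-function coefficient of R⁰₀ at the shell satisfies Σ_μ g^{0μ} [Γ³_{0μ}] = −√(g³³) Σ_α γ^{0α} [L_{0α}]. (This is the algebraic core of Lemma 4: the singular part of −√|g| R⁰₀/(8πG) is −√|γ|[L⁰₀] δ(x³ − x³₀)/(8πG) with L⁰₀ = γ^{0α}L_{0α}.) -/
open scoped BigOperators

lemma block_inv (g : Matrix (Fin 4) (Fin 4) ℝ) (hdet : g.det < 0) (h33 : 0 < g⁻¹ 3 3) :
    (g.submatrix (Fin.castSucc : Fin 3 → Fin 4) Fin.castSucc)⁻¹ =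
      Matrix.of (fun α β : Fin 3 =>
        g⁻¹ α.castSucc β.castSucc - g⁻¹ α.castSucc 3 * g⁻¹ 3 β.castSucc / g⁻¹ 3 3) := by
  have hunit : IsUnit g.det := (Ne.isUnit (ne_of_lt hdet))
  have hg : g * g⁻¹ = 1 := Matrix.mul_nonsing_inv g hunit
  have h1 : ∀ i j : Fin 4, ∑ k, g i k * g⁻¹ k j = if i = j then (1:ℝ) else 0 := by
    intro i j
    have := congrFun (congrFun hg i) j
    simpa [Matrix.mul_apply, Matrix.one_apply] using this
  apply Matrix.inv_eq_right_inv
  ext α β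
  simp only [Matrix.mul_apply, Matrix.submatrix_apply, Matrix.of_apply, Matrix.one_apply]
  have hsplit : ∀ i j : Fin 4, ∑ c : Fin 3, g i c.castSucc * g⁻¹ c.castSucc j
      = (if i = j then (1:ℝ) else 0) - g i 3 * g⁻¹ 3 j := by
    intro i j
    have := h1 i j
    rw [Fin.sum_univ_castSucc] at this
    have h3 : (Fin.last 3 : Fin 4) = 3 := rfl
    rw [h3] at this
    linarith
  have hne : α.castSucc ≠ (3 : Fin 4) := by
    have := Fin.castSucc_lt_last α
    exact Fin.ne_of_lt (by simpa using this)
  have e1 := hsplit α.castSucc β.castSucc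
  have e2 := hsplit α.castSucc 3
  simp only [Fin.castSucc_inj, hne, if_false] at e1 e2
  rw [Fin.sum_univ_three] at e1 e2 ⊢
  have h33ne : g⁻¹ 3 3 ≠ 0 := ne_of_gt h33
  have ht : g⁻¹ 3 3 * (g⁻¹ 3 3)⁻¹ = 1 := mul_inv_cancel₀ h33ne
  linear_combination e1 - (g⁻¹ 3 β.castSucc * (g⁻¹ 3 3)⁻¹) * e2
    + (g α.castSucc 3 * g⁻¹ 3 β.castSucc) * ht

/-- Algebraic core of Lemma 4: the delta-function coefficient of `R⁰₀` at the shell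
satisfies `Σ_μ g^{0μ} [Γ³_{0μ}] = −√(g³³) Σ_α γ^{0α} [L_{0α}]`, where `γ` is the induced
3-metric (the 3×3 block of `g` with indices in `{0,1,2}`) and `[f] = f⁺ − f⁻`. -/
theorem shell_R00_delta_coefficient (g : Matrix (Fin 4) (Fin 4) ℝ)
    (hsymm : g.IsSymm) (hdet : g.det < 0) (h33 : 0 < g⁻¹ 3 3)
    (Dp Dm : Fin 4 → Matrix (Fin 4) (Fin 4) ℝ)
    (hDp : ∀ ρ, (Dp ρ).IsSymm) (hDm : ∀ ρ, (Dm ρ).IsSymm)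
    (htang : ∀ ρ, ρ ≠ 3 → Dp ρ = Dm ρ) :
    ∑ μ, g⁻¹ 0 μ * (ChristJ g Dp 3 0 μ - ChristJ g Dm 3 0 μ)
      = -Real.sqrt (g⁻¹ 3 3) *
          ∑ α, (g.submatrix (Fin.castSucc : Fin 3 → Fin 4) Fin.castSucc)⁻¹ 0 α *
            (Lsff g Dp 0 α - Lsff g Dm 0 α) := by
  have h33ne : g⁻¹ 3 3 ≠ 0 := ne_of_gt h33
  have hsne : Real.sqrt (g⁻¹ 3 3) ≠ 0 := ne_of_gt (Real.sqrt_pos.mpr h33)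
  have hL : ∀ α : Fin 3, -Real.sqrt (g⁻¹ 3 3) * (Lsff g Dp 0 α - Lsff g Dm 0 α)
      = ChristJ g Dp 3 0 α.castSucc - ChristJ g Dm 3 0 α.castSucc := by
    intro α
    have key : ∀ a b s : ℝ, s ≠ 0 → -s * (-a / s - -b / s) = a - b := by
      intro a b s hs; field_simp; ring
    exact key _ _ _ hsne
  have hRHS : ∀ c : Fin 3 → ℝ,
      -Real.sqrt (g⁻¹ 3 3) * ∑ α, c α * (Lsff g Dp 0 α - Lsff g Dm 0 α)
        = ∑ α, c α * (ChristJ g Dp 3 0 α.castSucc - ChristJ g Dm 3 0 α.castSucc) := by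
    intro c
    rw [Finset.mul_sum]
    refine Finset.sum_congr rfl fun α _ => ?_
    rw [← hL α]; ring
  rw [block_inv g hdet h33, hRHS]
  have hD0 : Dp 0 = Dm 0 := htang 0 (by decide)
  have hD1 : Dp 1 = Dm 1 := htang 1 (by decide)
  have hD2 : Dp 2 = Dm 2 := htang 2 (by decide)
  have c2 : ((2 : Fin 3).castSucc) = (2 : Fin 4) := rfl
  have c0 : ((0 : Fin 3).castSucc) = (0 : Fin 4) := rfl
  have c1 : ((1 : Fin 3).castSucc) = (1 : Fin 4) := rfl
  simp only [ChristJ, Matrix.of_apply, Fin.sum_univ_four, Fin.sum_univ_three, c0, c1, c2,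
    hD0, hD1, hD2]
  rw [show Dp 3 1 0 = Dp 3 0 1 from (hDp 3).apply 0 1,
      show Dp 3 2 0 = Dp 3 0 2 from (hDp 3).apply 0 2,
      show Dp 3 3 0 = Dp 3 0 3 from (hDp 3).apply 0 3,
      show Dm 3 1 0 = Dm 3 0 1 from (hDm 3).apply 0 1,
      show Dm 3 2 0 = Dm 3 0 2 from (hDm 3).apply 0 2,
      show Dm 3 3 0 = Dm 3 0 3 from (hDm 3).apply 0 3]
  have ht : g⁻¹ 3 3 * (g⁻¹ 3 3)⁻¹ = 1 := mul_inv_cancel₀ h33ne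
  linear_combination (-(1/2) * g⁻¹ 0 3 * (g⁻¹ 3 0 * (Dp 3 0 0 - Dm 3 0 0)
    + g⁻¹ 3 1 * (Dp 3 0 1 - Dm 3 0 1) + g⁻¹ 3 2 * (Dp 3 0 2 - Dm 3 0 2))) * ht
end

section
/- Let g be the ADM 4-metric built from lapse N > 0, shift N_k ∈ ℝ³ and positive-definite symmetric 3×3 matrix q. Let h > 0, let Z be a real 3×4 matrix with invertible spatial block (Z_{ak}), let j^μ = h ε^{μνρσ} Z_{1ν} Z_{2ρ} Z_{3σ} with jᵀ g j < 0, set n = √(−jᵀ g j)/√(−det g), u^μ = j^μ/(√(−det g) n), and u_k = Σ_μ g_{kμ} u^μ for k ∈ {1,2,3}. Let ρ' ≠ 0 and define p_a = −√(−det g) ρ' ∂n/∂Z_{a0}. Then for each spatial index k: Σ_a p_a Z_{ak} = − ρ' j⁰ u_k, equivalently u_k = − (Σ_a p_a Z_{ak})/(ρ' j⁰). -/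
open scoped BigOperators

/-- The totally antisymmetric Levi-Civita symbol on four indices, with `eps 0 1 2 3 = 1`,
realized as the determinant of the matrix whose `i`-th row is the standard basis vector
indexed by the `i`-th argument. -/
noncomputable def eps (μ ν ρ σ : Fin 4) : ℝ :=
  Matrix.det (Matrix.of fun i j => if ![μ, ν, ρ, σ] i = j then (1 : ℝ) else 0)

/-- The mole current `j^μ = h ε^{μνρσ} Z_{1ν} Z_{2ρ} Z_{3σ}` built from the constant `h`
and the 3×4 Jacobian matrix `Z` (rows indexed by `Fin 3`). -/
noncomputable def Jcur (h : ℝ) (Z : Matrix (Fin 3) (Fin 4) ℝ) (μ : Fin 4) : ℝ :=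
  h * ∑ ν, ∑ ρ, ∑ σ, eps μ ν ρ σ * Z 0 ν * Z 1 ρ * Z 2 σ

/-- The ADM 4-metric built from a lapse `N`, a shift covector `Nk` and a spatial metric `q`:
`g₀₀ = −N² + Σ q^{kl} N_k N_l`, `g₀k = g_{k0} = N_k`, `g_{kl} = q_{kl}`.
The spatial index `k ∈ {1,2,3}` is realized as `Fin.succ k` for `k : Fin 3`. -/
noncomputable def ADM (N : ℝ) (Nk : Fin 3 → ℝ) (q : Matrix (Fin 3) (Fin 3) ℝ) :
    Matrix (Fin 4) (Fin 4) ℝ :=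
  Matrix.of fun μ ν =>
    Fin.cases (motive := fun _ => ℝ)
      (Fin.cases (motive := fun _ => ℝ)
        (-N ^ 2 + ∑ k, ∑ l, q⁻¹ k l * Nk k * Nk l) (fun l => Nk l) ν)
      (fun k => Fin.cases (motive := fun _ => ℝ) (Nk k) (fun l => q k l) ν) μ

/-! The Leibniz formula, written with `ε`, gives `j^μ = h det [e_μ; Z]`. Since the
determinant is linear in each row, shifting `Z_{a0}` by `t` moves the current along the line
`j + t D_a`, where `D_a^μ = h det [e_μ; Z with row a replaced by e₀]` is a cofactor of
`[e_μ; Z]`. Differentiating `n = √(-jᵀ g j)/√(-det g)` with `g` symmetric then gives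
`p_a = ρ' (D_a ⬝ g j)/√(-jᵀ g j)`. Reading off the entry `(0, k)` of `adj M * M = det M • 1`
for `M = [e_ν; Z]` gives `Σ_a D_a^ν Z_{ak} = -δ^ν_k j⁰`, and hence
`Σ_a p_a Z_{ak} = -ρ' j⁰ (g j)_k/√(-jᵀ g j) = -ρ' j⁰ u_k`. -/

open Matrix

theorem det_eq_sum_eps (M : Matrix (Fin 4) (Fin 4) ℝ) :
    M.det = ∑ μ, ∑ ν, ∑ ρ, ∑ σ, eps μ ν ρ σ * M 0 μ * M 1 ν * M 2 ρ * M 3 σ := by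
  simp +decide [eps, det_succ_row_zero, Fin.sum_univ_succ, Fin.succAbove_of_le_castSucc,
    Fin.succAbove_of_castSucc_lt]
  ring

section BorderedDet

variable {R : Type*} {n : ℕ} (v : Fin (n + 1) → R) (Z : Matrix (Fin n) (Fin (n + 1)) R)

theorem updateRow_of_cons_zero (w : Fin (n + 1) → R) :
    (of (vecCons v (of.symm Z))).updateRow 0 w = of (vecCons w (of.symm Z)) :=
  Fin.update_cons_zero (α := fun _ => Fin (n + 1) → R) v Z w

theorem updateRow_of_cons_succ (i : Fin n) (w : Fin (n + 1) → R) :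
    (of (vecCons v (of.symm Z))).updateRow i.succ w
      = of (vecCons v (of.symm (Z.updateRow i w))) :=
  (Fin.cons_update (α := fun _ => Fin (n + 1) → R) v Z i w).symm

variable [CommRing R]

theorem det_of_cons_updateRow_add_smul (i : Fin n) (w : Fin (n + 1) → R) (t : R) :
    (of (vecCons v (of.symm (Z.updateRow i (Z i + t • w))))).det
      = (of (vecCons v (of.symm Z))).det
        + t * (of (vecCons v (of.symm (Z.updateRow i w)))).det := by
  have h := det_updateRow_add (of (vecCons v (of.symm Z))) i.succ (Z i) (t • w)
  rw [det_updateRow_smul] at h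
  simpa only [updateRow_of_cons_succ, updateRow_eq_self] using h

theorem sum_det_of_cons_updateRow_mul {c : Fin (n + 1)} (hc : c ≠ 0) :
    ∑ i, (of (vecCons v (of.symm (Z.updateRow i (Pi.single 0 1))))).det * Z i c
      = -(v c * (of (vecCons (Pi.single 0 1) (of.symm Z))).det) := by
  have h := congrFun (congrFun (adjugate_mul (of (vecCons v (of.symm Z)))) 0) c
  rw [Matrix.smul_apply, one_apply_ne hc.symm, smul_zero, mul_apply, Fin.sum_univ_succ] at h
  simp only [adjugate_apply, updateRow_of_cons_zero, updateRow_of_cons_succ, of_apply,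
    cons_val_zero, cons_val_succ, of_symm_apply] at h
  linear_combination h

end BorderedDet

section Current

variable (h : ℝ) (Z : Matrix (Fin 3) (Fin 4) ℝ)

theorem Jcur_eq_det (μ : Fin 4) :
    Jcur h Z μ = h * (of (vecCons (Pi.single μ 1) (of.symm Z))).det := by
  rw [Jcur, det_eq_sum_eps]
  simp [Pi.single_apply]

theorem Jcur_add_smul_single (a : Fin 3) (t : ℝ) (μ : Fin 4) :
    Jcur h (Z + t • single a 0 1) μ
      = Jcur h Z μ + t * Jcur h (Z.updateRow a (Pi.single 0 1)) μ := by
  have hZ : Z + t • single a 0 1 = Z.updateRow a (Z a + t • Pi.single 0 1) := by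
    ext b ν
    rcases eq_or_ne b a with rfl | hb
    · simp [Pi.single_apply, single_apply, eq_comm]
    · simp [hb, single_apply_of_row_ne hb.symm]
  rw [Jcur_eq_det, Jcur_eq_det, Jcur_eq_det, hZ, det_of_cons_updateRow_add_smul]
  ring

theorem sum_Jcur_updateRow_mul (ν : Fin 4) {c : Fin 4} (hc : c ≠ 0) :
    ∑ a, Jcur h (Z.updateRow a (Pi.single 0 1)) ν * Z a c
      = -((Pi.single ν 1 : Fin 4 → ℝ) c * Jcur h Z 0) := by
  simp only [Jcur_eq_det, mul_assoc, ← Finset.mul_sum]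
  rw [sum_det_of_cons_updateRow_mul _ _ hc]
  ring

theorem sum_dotProduct_Jcur_updateRow_mul (w : Fin 4 → ℝ) {c : Fin 4} (hc : c ≠ 0) :
    ∑ a, (Jcur h (Z.updateRow a (Pi.single 0 1)) ⬝ᵥ w) * Z a c = -(Jcur h Z 0 * w c) := by
  calc ∑ a, (Jcur h (Z.updateRow a (Pi.single 0 1)) ⬝ᵥ w) * Z a c
      = ∑ ν, w ν * ∑ a, Jcur h (Z.updateRow a (Pi.single 0 1)) ν * Z a c := by
        simp only [dotProduct, Finset.sum_mul, Finset.mul_sum]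
        rw [Finset.sum_comm]
        exact Finset.sum_congr rfl fun ν _ => Finset.sum_congr rfl fun a _ => by ring
    _ = ∑ ν, w ν * -((Pi.single ν 1 : Fin 4 → ℝ) c * Jcur h Z 0) := by
        simp only [sum_Jcur_updateRow_mul h Z _ hc]
    _ = -(Jcur h Z 0 * w c) := by
        rw [Fintype.sum_eq_single c fun ν hν => by rw [Pi.single_eq_of_ne hν.symm]; ring,
          Pi.single_eq_same]
        ring

end Current

section ADM

variable (N : ℝ) (Nk : Fin 3 → ℝ) (q : Matrix (Fin 3) (Fin 3) ℝ)

theorem ADM_isSymm (hq : q.IsSymm) : (ADM N Nk q).IsSymm := by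
  refine IsSymm.ext fun μ ν => ?_
  induction μ using Fin.cases <;> induction ν using Fin.cases <;> simp [ADM, hq.apply]

theorem ADM_eq_submatrix_fromBlocks :
    ADM N Nk q = (fromBlocks (of fun _ _ : Fin 1 => -N ^ 2 + ∑ k, ∑ l, q⁻¹ k l * Nk k * Nk l)
      (of fun _ l => Nk l) (of fun k _ => Nk k) q).submatrix finSumFinEquiv.symm
      finSumFinEquiv.symm := by
  ext μ ν
  fin_cases μ <;> fin_cases ν <;> rfl

theorem det_ADM (hq : IsUnit q.det) : (ADM N Nk q).det = -N ^ 2 * q.det := by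
  have : Invertible q := q.invertibleOfIsUnitDet hq
  rw [ADM_eq_submatrix_fromBlocks, det_submatrix_equiv_self, det_fromBlocks₂₂, det_fin_one,
    invOf_eq_nonsing_inv]
  simp only [Matrix.sub_apply, of_apply, mul_apply, Finset.sum_mul]
  rw [Finset.sum_comm]
  simp only [mul_comm (Nk _) (q⁻¹ _ _)]
  ring

theorem neg_det_ADM_pos (hN : N ≠ 0) (hq : q.PosDef) : 0 < -(ADM N Nk q).det := by
  rw [det_ADM N Nk q hq.det_pos.ne'.isUnit, neg_mul, neg_neg]
  exact mul_pos (sq_pos_of_ne_zero hN) hq.det_pos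

end ADM

section QuadraticForm

variable {ι : Type*} [Fintype ι] (g : Matrix ι ι ℝ) (j d : ι → ℝ)

theorem hasDerivAt_sum_sum_mul_line :
    HasDerivAt (fun t => ∑ μ, ∑ ν, g μ ν * (j μ + t * d μ) * (j ν + t * d ν))
      (∑ μ, ∑ ν, g μ ν * (d μ * j ν + j μ * d ν)) 0 := by
  have hline : ∀ x, HasDerivAt (fun t : ℝ => j x + t * d x) (d x) 0 := fun x => by
    simpa using ((hasDerivAt_id (0 : ℝ)).mul_const (d x)).const_add (j x)
  refine HasDerivAt.fun_sum fun μ _ => HasDerivAt.fun_sum fun ν _ => ?_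
  refine (((hline μ).const_mul (g μ ν)).fun_mul (hline ν)).congr_deriv ?_
  simp only [zero_mul, add_zero]
  ring

theorem sum_sum_mul_add_of_isSymm (hg : g.IsSymm) :
    ∑ μ, ∑ ν, g μ ν * (d μ * j ν + j μ * d ν) = 2 * d ⬝ᵥ g *ᵥ j := by
  have hswap : ∑ μ, ∑ ν, g μ ν * (j μ * d ν) = ∑ μ, ∑ ν, g μ ν * (d μ * j ν) := by
    rw [Finset.sum_comm]
    exact Finset.sum_congr rfl fun μ _ => Finset.sum_congr rfl fun ν _ => by
      rw [hg.apply]; ring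
  simp only [mul_add, Finset.sum_add_distrib, hswap]
  rw [← two_mul]
  congr 1
  refine Finset.sum_congr rfl fun μ _ => ?_
  rw [mulVec, dotProduct, Finset.mul_sum]
  exact Finset.sum_congr rfl fun ν _ => by ring

end QuadraticForm

theorem hasDerivAt_nOf_line (g : Matrix (Fin 4) (Fin 4) ℝ) (hg : g.IsSymm) (j d : Fin 4 → ℝ)
    (hj : ∑ μ, ∑ ν, g μ ν * j μ * j ν < 0) :
    HasDerivAt (fun t => nOf (fun μ => j μ + t * d μ) g)
      (-(d ⬝ᵥ g *ᵥ j) / √(-∑ μ, ∑ ν, g μ ν * j μ * j ν) / √(-g.det)) 0 := by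
  have h := (((hasDerivAt_sum_sum_mul_line g j d).fun_neg.sqrt ?_).div_const √(-g.det))
  · refine h.congr_deriv ?_
    rw [sum_sum_mul_add_of_isSymm g j d hg]
    simp only [zero_mul, add_zero]
    ring
  · simp only [zero_mul, add_zero]
    exact (neg_pos.mpr hj).ne'

theorem hasDerivAt_nOf_Jcur_add_smul_single (g : Matrix (Fin 4) (Fin 4) ℝ) (hg : g.IsSymm)
    (h : ℝ) (Z : Matrix (Fin 3) (Fin 4) ℝ) (a : Fin 3)
    (hj : ∑ μ, ∑ ν, g μ ν * Jcur h Z μ * Jcur h Z ν < 0) :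
    HasDerivAt (fun t : ℝ => nOf (Jcur h (Z + t • single a 0 (1 : ℝ))) g)
      (-(Jcur h (Z.updateRow a (Pi.single 0 1)) ⬝ᵥ g *ᵥ Jcur h Z)
        / √(-∑ μ, ∑ ν, g μ ν * Jcur h Z μ * Jcur h Z ν) / √(-g.det)) 0 := by
  convert hasDerivAt_nOf_line g hg _ _ hj using 3 with t
  exact funext (Jcur_add_smul_single h Z a t)

theorem momenta_determine_covariant_velocity_general (N : ℝ) (hN : 0 < N) (Nk : Fin 3 → ℝ)
    (q : Matrix (Fin 3) (Fin 3) ℝ) (hq : q.PosDef)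
    (h : ℝ) (Z : Matrix (Fin 3) (Fin 4) ℝ)
    (htl : ∑ μ, ∑ ν, ADM N Nk q μ ν * Jcur h Z μ * Jcur h Z ν < 0)
    (ρ' : ℝ)
    (p : Fin 3 → ℝ)
    (hp : ∀ a, p a = -Real.sqrt (-(ADM N Nk q).det) * ρ' *
        deriv (fun t : ℝ =>
          nOf (Jcur h (Z + t • Matrix.single a 0 (1 : ℝ))) (ADM N Nk q)) 0) :
    ∀ k : Fin 3,
      ∑ a, p a * Z a k.succ
        = -ρ' * Jcur h Z 0 *
            ∑ μ, ADM N Nk q k.succ μ * uOf (Jcur h Z) (ADM N Nk q) μ := by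
  intro k
  set g := ADM N Nk q
  set j := Jcur h Z with hj_def
  set s := √(-∑ μ, ∑ ν, g μ ν * j μ * j ν) with hs_def
  have hg : g.IsSymm := ADM_isSymm N Nk q (isHermitian_iff_isSymm.mp hq.isHermitian)
  have hc : √(-g.det) ≠ 0 := (Real.sqrt_pos.mpr (neg_det_ADM_pos N Nk q hN.ne' hq)).ne'
  have hs : s ≠ 0 := Real.sqrt_ne_zero'.mpr (by linarith)
  have hp' : ∀ a, p a = ρ' / s * (Jcur h (Z.updateRow a (Pi.single 0 1)) ⬝ᵥ g *ᵥ j) := by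
    intro a
    rw [hp a, (hasDerivAt_nOf_Jcur_add_smul_single g hg h Z a htl).deriv, ← hj_def,
      ← hs_def]
    field_simp
  have hu : ∀ μ, uOf j g μ = j μ / s := fun μ => by
    rw [uOf, nOf, mul_div_cancel₀ _ hc]
  calc ∑ a, p a * Z a k.succ
      = ρ' / s * ∑ a, (Jcur h (Z.updateRow a (Pi.single 0 1)) ⬝ᵥ g *ᵥ j) * Z a k.succ := by
        simp only [hp', Finset.mul_sum, mul_assoc]
    _ = ρ' / s * -(j 0 * (g *ᵥ j) k.succ) := by
        rw [sum_dotProduct_Jcur_updateRow_mul h Z _ (Fin.succ_ne_zero k)]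
    _ = -ρ' * j 0 * ∑ μ, g k.succ μ * uOf j g μ := by
        simp only [hu, mul_div_assoc', ← Finset.sum_div, mulVec, dotProduct]
        ring

/-- Expression of the covariant spatial velocity through the canonical momenta:
`Σ_a p_a Z_{ak} = −ρ' j⁰ u_k`, where `u_k = Σ_μ g_{kμ} u^μ` and the momenta are
`p_a = −√(−det g) ρ' ∂n/∂Z_{a0}` (derivative of `n` with respect to the time column of `Z`
at fixed ADM metric `g`). -/
theorem momenta_determine_covariant_velocity (N : ℝ) (hN : 0 < N) (Nk : Fin 3 → ℝ)
    (q : Matrix (Fin 3) (Fin 3) ℝ) (hq : q.PosDef)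
    (h : ℝ) (hh : 0 < h) (Z : Matrix (Fin 3) (Fin 4) ℝ)
    (hB : IsUnit (Matrix.of fun a k : Fin 3 => Z a k.succ).det)
    (htl : ∑ μ, ∑ ν, ADM N Nk q μ ν * Jcur h Z μ * Jcur h Z ν < 0)
    (ρ' : ℝ) (hρ' : ρ' ≠ 0)
    (p : Fin 3 → ℝ)
    (hp : ∀ a, p a = -Real.sqrt (-(ADM N Nk q).det) * ρ' *
        deriv (fun t : ℝ =>
          nOf (Jcur h (Z + t • Matrix.single a 0 (1 : ℝ))) (ADM N Nk q)) 0) :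
    ∀ k : Fin 3,
      ∑ a, p a * Z a k.succ
        = -ρ' * Jcur h Z 0 *
            ∑ μ, ADM N Nk q k.succ μ * uOf (Jcur h Z) (ADM N Nk q) μ :=
  momenta_determine_covariant_velocity_general N hN Nk q hq h Z htl ρ' p hp
end
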